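/- Let r ∈ (0, +∞), m ≥ 1, and A ∈ M_m(K{X/r}). Suppose there exists U ∈ M_m(K{X/r}), invertible over K{X/r}, with ∂_X(U) = A·U (entrywise ∂_X). Then the map K{X/r}^m → K{X/r}^m, w ↦ ∂_X(w) − A·w, is surjective: for every v ∈ K{X/r}^m there exists w ∈ K{X/r}^m with ∂_X(w) − A·w = v. -/

import Mathlib

open scoped Classical
noncomputable section

namespace Ohkubo

/-- A derivation on a field: additive and satisfying the Leibniz rule. -/
structure IsDerivation {K : Type} [Field K] (d : K → K) : Prop where
  map_add : ∀ x y : K, d (x + y) = d x + d y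
  leibniz : ∀ x y : K, d (x * y) = d x * y + x * d y

/-- A map bounded for the norm. -/
def IsBoundedMap {K : Type} [NontriviallyNormedField K] (d : K → K) : Prop :=
  ∃ C : ℝ, ∀ x : K, ‖d x‖ ≤ C * ‖x‖

/-- Operator norm of a map with respect to a norm-like function `N`. -/
def opNormOn {V : Type} [Zero V] (N : V → ℝ) (f : V → V) : ℝ :=
  sSup {t : ℝ | ∃ v : V, v ≠ 0 ∧ t = N (f v) / N v}

/-- Spectral norm of a map with respect to a norm-like function `N`. -/
def spNormOn {V : Type} [Zero V] (N : V → ℝ) (f : V → V) : ℝ :=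
  sInf {t : ℝ | ∃ n : ℕ, 1 ≤ n ∧ t = (opNormOn N (f^[n])) ^ ((n : ℝ)⁻¹)}

/-- The residue characteristic `p(K)`: the unique prime `p` with `‖p‖ < 1`, if it exists,
and `0` otherwise. -/
def residueChar (K : Type) [NontriviallyNormedField K] : ℕ :=
  if h : ∃ p : ℕ, p.Prime ∧ ‖(p : K)‖ < 1 then h.choose else 0

/-- `ω(K) = |p(K)|^(1/(p(K)-1))` if `p(K) > 0`, and `1` otherwise. -/
def omegaK (K : Type) [NontriviallyNormedField K] : ℝ :=
  if residueChar K = 0 then 1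
  else ‖((residueChar K : ℕ) : K)‖ ^ (((residueChar K : ℝ) - 1)⁻¹)

/-- The spectral norm of a map `K → K`, computed with the norm of `K`. -/
def spNormK {K : Type} [NontriviallyNormedField K] (d : K → K) : ℝ :=
  spNormOn (fun x : K => ‖x‖) d

/-- `r(K,∂) = ω(K)/|∂|_sp`. -/
def radius {K : Type} [NontriviallyNormedField K] (d : K → K) : ℝ :=
  omegaK K / spNormK d

/-- The `i`-th term `‖a_i‖ s^i` entering the `s`-Gauss norm. -/
def gaussTerm {K : Type} [NontriviallyNormedField K] (s : ℝ) (f : PowerSeries K) (i : ℕ) : ℝ :=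
  ‖(PowerSeries.coeff i) f‖ * s ^ i

/-- `|f|_s < ∞`. -/
def MemBd {K : Type} [NontriviallyNormedField K] (s : ℝ) (f : PowerSeries K) : Prop :=
  BddAbove (Set.range (gaussTerm s f))

/-- `K[[X/s]]_0`, the power series with bounded `s`-Gauss norm. -/
def bdRing (K : Type) [NontriviallyNormedField K] (s : ℝ) : Set (PowerSeries K) :=
  {f | MemBd s f}

/-- `K{X/r}`, the power series convergent on the open disc of radius `r`. -/
def convRing (K : Type) [NontriviallyNormedField K] (r : ℝ) : Set (PowerSeries K) :=
  {f | ∀ s : ℝ, 0 < s → s < r → MemBd s f}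

/-- The formal derivative `∂_X` of a power series. -/
def dX {K : Type} [Field K] (f : PowerSeries K) : PowerSeries K :=
  PowerSeries.mk fun i => ((i : K) + 1) * (PowerSeries.coeff (i + 1)) f

/-- The Taylor map `g_0(c) = Σ_i (∂^i(c)/i!) X^i`. -/
def taylor {K : Type} [Field K] (d : K → K) (c : K) : PowerSeries K :=
  PowerSeries.mk fun i => d^[i] c / (i.factorial : K)

/-- A (nonarchimedean, multiplicatively compatible) norm on a `K`-vector space. -/
def CompatNorm (K : Type) {V : Type} [NontriviallyNormedField K] [AddCommGroup V] [Module K V]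
    (N : V → ℝ) : Prop :=
  (∀ v : V, 0 ≤ N v) ∧ (∀ v : V, N v = 0 ↔ v = 0) ∧
    (∀ x y : V, N (x + y) ≤ max (N x) (N y)) ∧
    ∀ (c : K) (v : V), N (c • v) = ‖c‖ * N v

/-- The spectral norm of `f` equals `c` (computed with any compatible norm; the value is
independent of the choice). -/
def HasSpNorm (K : Type) {V : Type} [NontriviallyNormedField K] [AddCommGroup V] [Module K V]
    (f : V → V) (c : ℝ) : Prop :=
  ∃ N : V → ℝ, CompatNorm K N ∧ spNormOn N f = c

/-- A differential operator on `V` relative to the derivation `d`. -/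
def IsDiffOp {K V : Type} [NontriviallyNormedField K] [AddCommGroup V] [Module K V]
    (d : K → K) (D : V → V) : Prop :=
  (∀ x y : V, D (x + y) = D x + D y) ∧ ∀ (c : K) (v : V), D (c • v) = d c • v + c • D v

/-- `(V, D)` is an irreducible differential module. -/
def IsIrred (K : Type) (V : Type) [NontriviallyNormedField K] [AddCommGroup V] [Module K V]
    (D : V → V) : Prop :=
  (∃ v : V, v ≠ 0) ∧ ∀ p : Submodule K V, (∀ x ∈ p, D x ∈ p) → p = ⊥ ∨ p = ⊤

/-- `DW` is the operator induced by `D` on the subquotient `q ⧸ p`. -/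
def InducedOn {K V : Type} [NontriviallyNormedField K] [AddCommGroup V] [Module K V]
    (D : V → V) (p q : Submodule K V)
    (DW : (↥q ⧸ p.comap q.subtype) → (↥q ⧸ p.comap q.subtype)) : Prop :=
  ∀ (x : V) (hx : x ∈ q) (hDx : D x ∈ q),
    DW (Submodule.Quotient.mk ⟨x, hx⟩) = Submodule.Quotient.mk ⟨D x, hDx⟩

/-- Every irreducible subquotient of `(V, D)` has spectral norm `c`. -/
def PureRadius (K : Type) (V : Type) [NontriviallyNormedField K] [AddCommGroup V] [Module K V]
    (D : V → V) (c : ℝ) : Prop :=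
  ∀ p q : Submodule K V, p ≤ q → (∀ x ∈ p, D x ∈ p) → (∀ x ∈ q, D x ∈ q) →
    ∀ DW : (↥q ⧸ p.comap q.subtype) → (↥q ⧸ p.comap q.subtype),
      InducedOn D p q DW → IsIrred K (↥q ⧸ p.comap q.subtype) DW → HasSpNorm K DW c

/-- `V_r`: the sum of all `D`-stable subspaces all of whose irreducible subquotients have
spectral norm `ω(K)/r`. -/
def pureSub (K : Type) {V : Type} [NontriviallyNormedField K] [AddCommGroup V] [Module K V]
    (D : V → V) (r : ℝ) : Submodule K V :=
  sSup {p : Submodule K V | ∃ hp : ∀ x ∈ p, D x ∈ p,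
    PureRadius K ↥p (fun y : ↥p => (⟨D y.1, hp y.1 y.2⟩ : ↥p)) (omegaK K / r)}

/-- `V_{r_J}`: the sum of all subspaces stable under all the `D j` all of whose irreducible
`D j`-subquotients have spectral norm `ω(K)/r_j`, for every `j`. -/
def pureSubFam (K : Type) {V J : Type} [NontriviallyNormedField K] [AddCommGroup V] [Module K V]
    (D : J → V → V) (rJ : J → ℝ) : Submodule K V :=
  sSup {p : Submodule K V | ∃ hp : ∀ (j : J), ∀ x ∈ p, D j x ∈ p,
    ∀ j : J, PureRadius K ↥p (fun y : ↥p => (⟨D j y.1, hp j y.1 y.2⟩ : ↥p)) (omegaK K / rJ j)}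

/-- A solution map: an additive map `V → K[[X]]` semilinear for the Taylor map and
intertwining `D` with `∂_X`. -/
def IsSolMap {K V : Type} [NontriviallyNormedField K] [AddCommGroup V] [Module K V]
    (d : K → K) (D : V → V) (s : V → PowerSeries K) : Prop :=
  (∀ x y : V, s (x + y) = s x + s y) ∧
    (∀ (c : K) (v : V), s (c • v) = taylor d c * s v) ∧
    ∀ v : V, s (D v) = dX (s v)


section MyAux

section Aux

variable {K : Type} [NontriviallyNormedField K]

lemma norm_finsetSum_le (hna : IsNonarchimedean fun x : K => ‖x‖) {ι : Type}
    (t : Finset ι) (f : ι → K) {C : ℝ} (hC : 0 ≤ C) (h : ∀ i ∈ t, ‖f i‖ ≤ C) :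
    ‖∑ i ∈ t, f i‖ ≤ C := by
  classical
  induction t using Finset.cons_induction with
  | empty => simpa
  | cons a t ha ih =>
    rw [Finset.sum_cons]
    exact le_trans (hna _ _)
      (max_le (h a (Finset.mem_cons_self a t)) (ih fun i hi => h i (Finset.mem_cons_of_mem hi)))

lemma memBd_iff {s : ℝ} {f : PowerSeries K} :
    MemBd s f ↔ ∃ C : ℝ, ∀ i, gaussTerm s f i ≤ C := by
  constructor
  · rintro ⟨C, hC⟩; exact ⟨C, fun i => hC ⟨i, rfl⟩⟩
  · rintro ⟨C, hC⟩; exact ⟨C, by rintro x ⟨i, rfl⟩; exact hC i⟩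

lemma memBd_zero {s : ℝ} : MemBd s (0 : PowerSeries K) := by
  refine memBd_iff.2 ⟨0, fun i => ?_⟩
  simp [gaussTerm]

lemma memBd_add (hna : IsNonarchimedean fun x : K => ‖x‖) {s : ℝ} (hs : 0 < s)
    {f g : PowerSeries K} (hf : MemBd s f) (hg : MemBd s g) : MemBd s (f + g) := by
  obtain ⟨C, hC⟩ := memBd_iff.1 hf
  obtain ⟨D, hD⟩ := memBd_iff.1 hg
  refine memBd_iff.2 ⟨max C D, fun i => ?_⟩
  have h1 : gaussTerm s (f + g) i ≤ max (gaussTerm s f i) (gaussTerm s g i) := by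
    have := hna ((PowerSeries.coeff i) f) ((PowerSeries.coeff i) g)
    simp only [gaussTerm, map_add]
    calc ‖(PowerSeries.coeff i) f + (PowerSeries.coeff i) g‖ * s ^ i
        ≤ max ‖(PowerSeries.coeff i) f‖ ‖(PowerSeries.coeff i) g‖ * s ^ i :=
          mul_le_mul_of_nonneg_right this (by positivity)
      _ = _ := max_mul_of_nonneg _ _ (by positivity)
  exact h1.trans (max_le_max (hC i) (hD i))

lemma memBd_mul (hna : IsNonarchimedean fun x : K => ‖x‖) {s : ℝ} (hs : 0 < s)
    {f g : PowerSeries K} (hf : MemBd s f) (hg : MemBd s g) : MemBd s (f * g) := by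
  obtain ⟨C, hC⟩ := memBd_iff.1 hf
  obtain ⟨D, hD⟩ := memBd_iff.1 hg
  have hC0 : (0:ℝ) ≤ max C 0 := le_max_right _ _
  have hD0 : (0:ℝ) ≤ max D 0 := le_max_right _ _
  refine memBd_iff.2 ⟨max C 0 * max D 0, fun n => ?_⟩
  have hsn : (0:ℝ) < s ^ n := by positivity
  have key : ‖(PowerSeries.coeff n) (f * g)‖ ≤ max C 0 * max D 0 / s ^ n := by
    rw [PowerSeries.coeff_mul]
    refine norm_finsetSum_le hna _ _ (by positivity) ?_
    rintro ⟨i, j⟩ hij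
    have hij' : i + j = n := Finset.HasAntidiagonal.mem_antidiagonal.1 hij
    rw [le_div_iff₀ hsn, norm_mul, ← hij', pow_add]
    have h1 : ‖(PowerSeries.coeff i) f‖ * s ^ i ≤ max C 0 :=
      le_max_of_le_left (hC i)
    have h2 : ‖(PowerSeries.coeff j) g‖ * s ^ j ≤ max D 0 :=
      le_max_of_le_left (hD j)
    calc ‖(PowerSeries.coeff i) f‖ * ‖(PowerSeries.coeff j) g‖ * (s ^ i * s ^ j)
        = (‖(PowerSeries.coeff i) f‖ * s ^ i) * (‖(PowerSeries.coeff j) g‖ * s ^ j) := by ring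
      _ ≤ max C 0 * max D 0 := mul_le_mul h1 h2 (by positivity) hC0
  calc gaussTerm s (f * g) n ≤ (max C 0 * max D 0 / s ^ n) * s ^ n :=
        mul_le_mul_of_nonneg_right key hsn.le
    _ = max C 0 * max D 0 := div_mul_cancel₀ _ hsn.ne'

lemma convRing_zero {r : ℝ} : (0 : PowerSeries K) ∈ convRing K r :=
  fun _ _ _ => memBd_zero

lemma convRing_add (hna : IsNonarchimedean fun x : K => ‖x‖) {r : ℝ}
    {f g : PowerSeries K} (hf : f ∈ convRing K r) (hg : g ∈ convRing K r) :
    f + g ∈ convRing K r :=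
  fun s hs hsr => memBd_add hna hs (hf s hs hsr) (hg s hs hsr)

lemma convRing_mul (hna : IsNonarchimedean fun x : K => ‖x‖) {r : ℝ}
    {f g : PowerSeries K} (hf : f ∈ convRing K r) (hg : g ∈ convRing K r) :
    f * g ∈ convRing K r :=
  fun s hs hsr => memBd_mul hna hs (hf s hs hsr) (hg s hs hsr)

lemma convRing_sum (hna : IsNonarchimedean fun x : K => ‖x‖) {r : ℝ} {ι : Type}
    (t : Finset ι) (f : ι → PowerSeries K) (h : ∀ i ∈ t, f i ∈ convRing K r) :
    (∑ i ∈ t, f i) ∈ convRing K r := by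
  classical
  induction t using Finset.cons_induction with
  | empty => simpa using convRing_zero
  | cons a t ha ih =>
    rw [Finset.sum_cons]
    exact convRing_add hna (h a (Finset.mem_cons_self a t))
      (ih fun i hi => h i (Finset.mem_cons_of_mem hi))

end Aux

section NormAux
variable {K : Type} [NontriviallyNormedField K]

lemma norm_natCast_le_one (hna : IsNonarchimedean fun x : K => ‖x‖) (n : ℕ) :
    ‖(n : K)‖ ≤ 1 := by
  induction n with
  | zero => simp
  | succ k ih =>
    push_cast
    exact le_trans (hna _ _) (by simpa using ih)

lemma norm_intCast_le_one (hna : IsNonarchimedean fun x : K => ‖x‖) (a : ℤ) :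
    ‖(a : K)‖ ≤ 1 := by
  have h1 : ‖((a.natAbs : ℕ) : K)‖ ≤ 1 := norm_natCast_le_one hna a.natAbs
  rcases Int.natAbs_eq a with h | h <;> rw [h]
  · rwa [Int.cast_natCast]
  · rwa [Int.cast_neg, norm_neg, Int.cast_natCast]

lemma norm_eq_one_aux (hna : IsNonarchimedean fun x : K => ‖x‖) :
    ∀ n : ℕ, n ≠ 0 → (∀ q : ℕ, q.Prime → q ∣ n → ‖(q : K)‖ = 1) → ‖(n : K)‖ = 1 := by
  intro n
  induction n using Nat.strong_induction_on with
  | _ n ih =>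
    intro hn h
    rcases eq_or_ne n 1 with rfl | hn1
    · simp
    · have hp : n.minFac.Prime := Nat.minFac_prime hn1
      have hdvd : n.minFac ∣ n := Nat.minFac_dvd n
      have hmul : n.minFac * (n / n.minFac) = n := Nat.mul_div_cancel' hdvd
      have hlt : n / n.minFac < n := Nat.div_lt_self (Nat.pos_of_ne_zero hn) hp.one_lt
      have hne : n / n.minFac ≠ 0 := by
        intro h0
        rw [h0, mul_zero] at hmul
        exact hn hmul.symm
      have h2 : ‖((n / n.minFac : ℕ) : K)‖ = 1 :=
        ih _ hlt hne (fun q hq hqd => h q hq (hqd.trans (Nat.div_dvd_of_dvd hdvd)))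
      have h1 : ‖((n.minFac : ℕ) : K)‖ = 1 := h _ hp hdvd
      calc ‖(n : K)‖ = ‖((n.minFac * (n / n.minFac) : ℕ) : K)‖ := by rw [hmul]
        _ = ‖(n.minFac : K)‖ * ‖((n / n.minFac : ℕ) : K)‖ := by push_cast; rw [norm_mul]
        _ = 1 := by rw [h1, h2, one_mul]

lemma exists_inv_norm_le [CharZero K] (hna : IsNonarchimedean fun x : K => ‖x‖) :
    ∃ k : ℕ, ∀ n : ℕ, n ≠ 0 → ‖(n : K)‖⁻¹ ≤ (n : ℝ) ^ k := by
  by_cases hall : ∀ q : ℕ, q.Prime → ‖(q : K)‖ = 1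
  · refine ⟨0, fun n hn => ?_⟩
    rw [norm_eq_one_aux hna n hn (fun q hq _ => hall q hq)]
    simp
  · push_neg at hall
    obtain ⟨p, hp, hpne⟩ := hall
    have hplt : ‖(p : K)‖ < 1 := lt_of_le_of_ne (norm_natCast_le_one hna p) hpne
    have hpK : (p : K) ≠ 0 := Nat.cast_ne_zero.2 hp.pos.ne'
    have hppos : 0 < ‖(p : K)‖ := norm_pos_iff.2 hpK
    -- all other primes have norm 1
    have hq1 : ∀ q : ℕ, q.Prime → q ≠ p → ‖(q : K)‖ = 1 := by
      intro q hq hqp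
      refine le_antisymm (norm_natCast_le_one hna q) ?_
      by_contra hlt
      push_neg at hlt
      have hcop : Nat.Coprime p q := (Nat.coprime_primes hp hq).2 (Ne.symm hqp)
      have hbez : (1 : ℤ) = p * Nat.gcdA p q + q * Nat.gcdB p q := by
        have := Nat.gcd_eq_gcd_ab p q
        rwa [hcop, Nat.cast_one] at this
      have hKeq : (1 : K) = (p : K) * ((Nat.gcdA p q : ℤ) : K) + (q : K) * ((Nat.gcdB p q : ℤ) : K) := by
        exact_mod_cast congrArg (fun z : ℤ => (z : K)) hbez
      have h1 : (1 : ℝ) ≤ max (‖(p : K) * ((Nat.gcdA p q : ℤ) : K)‖)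
          (‖(q : K) * ((Nat.gcdB p q : ℤ) : K)‖) := by
        have := hna ((p : K) * ((Nat.gcdA p q : ℤ) : K)) ((q : K) * ((Nat.gcdB p q : ℤ) : K))
        calc (1:ℝ) = ‖(1 : K)‖ := by simp
          _ = ‖(p : K) * ((Nat.gcdA p q : ℤ) : K) + (q : K) * ((Nat.gcdB p q : ℤ) : K)‖ := by
              rw [← hKeq]
          _ ≤ _ := this
      have h2 : ‖(p : K) * ((Nat.gcdA p q : ℤ) : K)‖ < 1 := by
        rw [norm_mul]
        calc ‖(p : K)‖ * ‖((Nat.gcdA p q : ℤ) : K)‖ ≤ ‖(p : K)‖ * 1 :=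
              mul_le_mul_of_nonneg_left (norm_intCast_le_one hna _) hppos.le
          _ = ‖(p : K)‖ := mul_one _
          _ < 1 := hplt
      have h3 : ‖(q : K) * ((Nat.gcdB p q : ℤ) : K)‖ < 1 := by
        rw [norm_mul]
        calc ‖(q : K)‖ * ‖((Nat.gcdB p q : ℤ) : K)‖ ≤ ‖(q : K)‖ * 1 :=
              mul_le_mul_of_nonneg_left (norm_intCast_le_one hna _) (norm_nonneg _)
          _ = ‖(q : K)‖ := mul_one _
          _ < 1 := hlt
      exact absurd h1 (not_le.2 (max_lt h2 h3))
    obtain ⟨k, hk⟩ := pow_unbounded_of_one_lt (‖(p : K)‖⁻¹)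
      (by exact_mod_cast hp.one_lt : (1 : ℝ) < (p : ℕ))
    refine ⟨k, fun n hn => ?_⟩
    set v := n.factorization p with hv
    have hsplit : p ^ v * (n / p ^ v) = n := Nat.ordProj_mul_ordCompl_eq_self n p
    have hndvd : ¬ p ∣ (n / p ^ v) := Nat.not_dvd_ordCompl hp hn
    have hmne : (n / p ^ v) ≠ 0 := by
      intro h0
      rw [h0, mul_zero] at hsplit
      exact hn hsplit.symm
    have hm1 : ‖((n / p ^ v : ℕ) : K)‖ = 1 := by
      refine norm_eq_one_aux hna _ hmne (fun q hq hqd => hq1 q hq ?_)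
      rintro rfl
      exact hndvd hqd
    have hnorm : ‖(n : K)‖ = ‖(p : K)‖ ^ v := by
      calc ‖(n : K)‖ = ‖((p ^ v * (n / p ^ v) : ℕ) : K)‖ := by rw [hsplit]
        _ = ‖(p : K)‖ ^ v * ‖((n / p ^ v : ℕ) : K)‖ := by push_cast; rw [norm_mul, norm_pow]
        _ = ‖(p : K)‖ ^ v := by rw [hm1, mul_one]
    rw [hnorm, ← inv_pow]
    have hple : ((p ^ v : ℕ) : ℝ) ≤ (n : ℝ) := by exact_mod_cast Nat.ordProj_le p hn
    calc (‖(p : K)‖⁻¹) ^ v ≤ (((p : ℕ) : ℝ) ^ k) ^ v :=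
          pow_le_pow_left₀ (by positivity) hk.le v
      _ = (((p : ℕ) : ℝ) ^ v) ^ k := by rw [← pow_mul, ← pow_mul, Nat.mul_comm]
      _ ≤ (n : ℝ) ^ k := by
          refine pow_le_pow_left₀ (by positivity) ?_ k
          push_cast at hple ⊢
          exact hple


end NormAux

section IntAux
variable {K : Type} [NontriviallyNormedField K]

section dXlem
variable {K : Type} [Field K]

lemma dX_eq (f : PowerSeries K) : dX f = PowerSeries.derivativeFun f := by
  ext n
  rw [dX, PowerSeries.coeff_mk]
  change _ = PowerSeries.coeff n (PowerSeries.derivative K f)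
  rw [PowerSeries.coeff_derivative]
  push_cast
  ring

lemma dX_mul (f g : PowerSeries K) : dX (f * g) = dX f * g + f * dX g := by
  simp only [dX_eq, PowerSeries.derivativeFun_mul, smul_eq_mul]
  ring

lemma dX_zero : dX (0 : PowerSeries K) = 0 := by
  ext n; simp [dX]

lemma dX_add (f g : PowerSeries K) : dX (f + g) = dX f + dX g := by
  simp only [dX_eq, PowerSeries.derivativeFun_add]

lemma dX_sum {ι : Type} (t : Finset ι) (f : ι → PowerSeries K) :
    dX (∑ i ∈ t, f i) = ∑ i ∈ t, dX (f i) := by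
  classical
  induction t using Finset.cons_induction with
  | empty => simpa using dX_zero
  | cons a t ha ih => rw [Finset.sum_cons, Finset.sum_cons, dX_add, ih]

/-- formal antiderivative with zero constant term -/
def intX (f : PowerSeries K) : PowerSeries K :=
  PowerSeries.mk fun i => Nat.casesOn i 0 (fun j => PowerSeries.coeff j f / ((j : K) + 1))

lemma coeff_intX_succ (f : PowerSeries K) (j : ℕ) :
    PowerSeries.coeff (j + 1) (intX f) = PowerSeries.coeff j f / ((j : K) + 1) := by
  rw [intX, PowerSeries.coeff_mk]

lemma coeff_intX_zero (f : PowerSeries K) : PowerSeries.coeff 0 (intX f) = 0 := by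
  rw [intX, PowerSeries.coeff_mk]; rfl

lemma dX_intX [CharZero K] (f : PowerSeries K) : dX (intX f) = f := by
  ext n
  rw [dX, PowerSeries.coeff_mk, coeff_intX_succ]
  rw [mul_div_cancel₀]
  exact Nat.cast_add_one_ne_zero n

end dXlem

lemma memBd_intX [CharZero K] (hna : IsNonarchimedean fun x : K => ‖x‖)
    {r : ℝ} {f : PowerSeries K} (hf : f ∈ convRing K r) : intX f ∈ convRing K r := by
  intro s hs hsr
  set s' : ℝ := (s + r) / 2 with hs'
  have hss' : s < s' := by rw [hs']; linarith
  have hs'r : s' < r := by rw [hs']; linarith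
  have hs'0 : 0 < s' := hs.trans hss'
  obtain ⟨C, hC⟩ := memBd_iff.1 (hf s' hs'0 hs'r)
  have hC0 : (0:ℝ) ≤ max C 0 := le_max_right _ _
  obtain ⟨k, hk⟩ := exists_inv_norm_le hna
  -- sequence (n+1)^k * (s/s')^(n+1) is bounded
  have hθ : 0 ≤ s / s' := by positivity
  have hθ1 : s / s' < 1 := (div_lt_one hs'0).2 hss'
  have htend : Filter.Tendsto (fun n : ℕ => (n : ℝ) ^ k * (s / s') ^ n)
      Filter.atTop (nhds 0) := tendsto_pow_const_mul_const_pow_of_lt_one k hθ hθ1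
  obtain ⟨M, hM⟩ := htend.bddAbove_range
  have hM' : ∀ n : ℕ, (n : ℝ) ^ k * (s / s') ^ n ≤ M := fun n => hM ⟨n, rfl⟩
  refine memBd_iff.2 ⟨max (max C 0 * M * s') 0, fun n => ?_⟩
  match n with
  | 0 =>
    rw [gaussTerm, coeff_intX_zero]
    simp
  | Nat.succ j =>
    refine le_max_of_le_left ?_
    rw [gaussTerm, coeff_intX_succ, norm_div]
    have hjK : ‖((j : K) + 1)‖ = ‖((j + 1 : ℕ) : K)‖ := by push_cast; ring_nf
    have hinv : ‖((j : K) + 1)‖⁻¹ ≤ ((j + 1 : ℕ) : ℝ) ^ k := by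
      rw [hjK]; exact hk (j + 1) (Nat.succ_ne_zero j)
    have hfj : ‖PowerSeries.coeff j f‖ * s' ^ j ≤ max C 0 := le_max_of_le_left (hC j)
    have hnn : (0:ℝ) ≤ ‖PowerSeries.coeff j f‖ := norm_nonneg _
    calc ‖PowerSeries.coeff j f‖ / ‖(j : K) + 1‖ * s ^ (j + 1)
        = ‖PowerSeries.coeff j f‖ * ‖((j : K) + 1)‖⁻¹ * s ^ (j + 1) := by
          rw [div_eq_mul_inv]
      _ ≤ ‖PowerSeries.coeff j f‖ * ((j + 1 : ℕ) : ℝ) ^ k * s ^ (j + 1) := by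
          refine mul_le_mul_of_nonneg_right (mul_le_mul_of_nonneg_left hinv hnn) (by positivity)
      _ = (‖PowerSeries.coeff j f‖ * s' ^ j) * ((((j+1 : ℕ) : ℝ)) ^ k * (s / s') ^ (j+1)) * s' := by
          clear_value s'
          rw [div_pow]
          field_simp
          ring
      _ ≤ max C 0 * M * s' := by
          refine mul_le_mul_of_nonneg_right ?_ hs'0.le
          refine mul_le_mul hfj (hM' (j+1)) ?_ hC0
          positivity


end IntAux

end MyAux

/-- If the system `∂_X(U) = A·U` has a fundamental solution matrix
invertible over `K{X/r}`, then `w ↦ ∂_X(w) - A·w` is surjective on `K{X/r}^m`. -/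
theorem inhomogeneous_solvable_of_fundamental_matrix
    (K : Type) [NontriviallyNormedField K] [CompleteSpace K] [CharZero K]
    (hna : IsNonarchimedean fun x : K => ‖x‖)
    (r : ℝ) (hr : 0 < r) (m : ℕ) (hm : 1 ≤ m)
    (A : Matrix (Fin m) (Fin m) (PowerSeries K)) (hA : ∀ h k, A h k ∈ convRing K r)
    (U Uinv : Matrix (Fin m) (Fin m) (PowerSeries K))
    (hU : ∀ h k, U h k ∈ convRing K r) (hUinv : ∀ h k, Uinv h k ∈ convRing K r)
    (hUU : U * Uinv = 1) (hUU' : Uinv * U = 1)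
    (hUsol : ∀ h k, dX (U h k) = (A * U) h k) :
    ∀ v : Fin m → PowerSeries K, (∀ h, v h ∈ convRing K r) →
      ∃ w : Fin m → PowerSeries K, (∀ h, w h ∈ convRing K r) ∧
        ∀ h, dX (w h) - (A.mulVec w) h = v h := by
  intro v hv
  set z : Fin m → PowerSeries K := Uinv.mulVec v with hz
  have hzconv : ∀ h, z h ∈ convRing K r := by
    intro h
    simp only [hz, Matrix.mulVec, dotProduct]
    exact convRing_sum hna _ _ (fun k _ => convRing_mul hna (hUinv h k) (hv k))
  set y : Fin m → PowerSeries K := fun h => intX (z h) with hy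
  have hyconv : ∀ h, y h ∈ convRing K r := fun h => memBd_intX hna (hzconv h)
  have hdy : ∀ h, dX (y h) = z h := fun h => dX_intX (z h)
  refine ⟨U.mulVec y, ?_, ?_⟩
  · intro h
    simp only [Matrix.mulVec, dotProduct]
    exact convRing_sum hna _ _ (fun k _ => convRing_mul hna (hU h k) (hyconv k))
  · intro h
    have h1 : (U.mulVec z) = v := by
      rw [hz, Matrix.mulVec_mulVec, hUU, Matrix.one_mulVec]
    have key : dX ((U.mulVec y) h) = (A.mulVec (U.mulVec y)) h + v h := by
      calc dX ((U.mulVec y) h) = ∑ k, dX (U h k * y k) := by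
            simp only [Matrix.mulVec, dotProduct]; rw [dX_sum]
        _ = ∑ k, ((A * U) h k * y k + U h k * z k) := by
            refine Finset.sum_congr rfl fun k _ => ?_
            rw [dX_mul, hUsol, hdy]
        _ = ((A * U).mulVec y) h + (U.mulVec z) h := by
            rw [Finset.sum_add_distrib]
            simp [Matrix.mulVec, dotProduct]
        _ = (A.mulVec (U.mulVec y)) h + v h := by rw [← Matrix.mulVec_mulVec, h1]
    rw [key]; ring

end Ohkubo
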